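/- Let (r_k) satisfy r_{k+1} = v_k - 1/r_k with |v_k| ≤ Cλ, and suppose there exists a sequence of indices so that |r_1 ⋯ r_l| → ∞ as l → ∞ along indices where products are taken after the pairing of small factors. Define w_j = 1/r_1 + 1/(r_1² r_2) + ⋯ + 1/(r_1² ⋯ r_{k_j-1}² r_{k_j}) and h_j = 1/(r_1² ⋯ r_{k_j}²), where (k_j) enumerates indices with |r_{k_j}| ≥ λ^{-2}. If (w_j) converges to some w ∈ ℝ and h_j → 0, then for every s_0 ≠ w with s_0 ≠ 0, defining s_1 = r_1 - 1/s_0 and s_{j+1} = v_j - 1/s_j, one has |r_{k_j + 1} - s_{k_j + 1}| = h_j / |s_0 - w_j| → 0 as j → ∞. -/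

import Mathlib

/-!
Put `D k = (r (k+1) - s (k+1))⁻¹`. Since `(v - 1/r) - (v - 1/s) = (r - s)/(r s)` and
`s = r - 1/D`, the two orbits give the linear recurrence `D (k+1) = r_{k+1}² D k - r_{k+1}`
with `D 0 = s₀`, whose solution is `D k = r₁²⋯r_k² (s₀ - w_(k))`.
-/

open Finset Filter

namespace Shadowing

variable (r : ℕ → ℝ)

def sqProd (k : ℕ) : ℝ := ∏ m ∈ Icc 1 k, (r m)^2

noncomputable def weightedInvSum (k : ℕ) : ℝ := ∑ i ∈ Icc 1 k, (sqProd r (i-1) * r i)⁻¹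

variable {r}

theorem sqProd_succ (k : ℕ) : sqProd r (k+1) = sqProd r k * r (k+1)^2 :=
  prod_Icc_succ_top (by omega) _

theorem weightedInvSum_succ (k : ℕ) :
    weightedInvSum r (k+1) = weightedInvSum r k + (sqProd r k * r (k+1))⁻¹ :=
  sum_Icc_succ_top (by omega) _

theorem sqProd_pos (hr : ∀ m, 1 ≤ m → r m ≠ 0) (k : ℕ) : 0 < sqProd r k :=
  prod_pos fun m hm => sq_pos_of_ne_zero (hr m (mem_Icc.mp hm).1)

theorem eq_sqProd_mul_sub_weightedInvSum {D : ℕ → ℝ} (hr : ∀ m, 1 ≤ m → r m ≠ 0)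
    (hD : ∀ k, D (k+1) = r (k+1)^2 * D k - r (k+1)) (k : ℕ) :
    D k = sqProd r k * (D 0 - weightedInvSum r k) := by
  induction k with
  | zero => simp [sqProd, weightedInvSum]
  | succ k ih =>
    have hP := (sqProd_pos hr k).ne'
    have hrk := hr (k+1) (by omega)
    rw [hD, ih, sqProd_succ, weightedInvSum_succ]
    field_simp
    ring

theorem sub_step_ne_zero (v : ℝ) {a b : ℝ} (hab : a - b ≠ 0) :
    (v - 1/a) - (v - 1/b) ≠ 0 := by
  rw [sub_sub_sub_cancel_left, sub_ne_zero, one_div, one_div, ne_eq, inv_inj]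
  exact (sub_ne_zero.mp hab).symm

theorem inv_sub_step (v : ℝ) {a b : ℝ} (ha : a ≠ 0) (hb : b ≠ 0) (hab : a - b ≠ 0) :
    ((v - 1/a) - (v - 1/b))⁻¹ = a^2 * (a - b)⁻¹ - a := by
  rw [sub_sub_sub_cancel_left, div_sub_div _ _ hb ha, inv_div]
  field_simp
  ring

variable {v s : ℕ → ℝ}

theorem shadow_sub_ne_zero (hrrec : ∀ j, 1 ≤ j → r (j+1) = v j - 1 / r j)
    (hs1 : s 1 = r 1 - 1 / s 0) (hsrec : ∀ j, 1 ≤ j → s (j+1) = v j - 1 / s j)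
    (hs0 : s 0 ≠ 0) (k : ℕ) : r (k+1) - s (k+1) ≠ 0 := by
  induction k with
  | zero => simpa [hs1] using hs0
  | succ k ih =>
    rw [hrrec _ (by omega), hsrec _ (by omega)]
    exact sub_step_ne_zero _ ih

theorem shadow_sub_eq (hrrec : ∀ j, 1 ≤ j → r (j+1) = v j - 1 / r j)
    (hs1 : s 1 = r 1 - 1 / s 0) (hsrec : ∀ j, 1 ≤ j → s (j+1) = v j - 1 / s j)
    (hrne : ∀ j, 1 ≤ j → r j ≠ 0) (hsne : ∀ j, s j ≠ 0) (k : ℕ) :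
    r (k+1) - s (k+1) = (sqProd r k * (s 0 - weightedInvSum r k))⁻¹ := by
  set D : ℕ → ℝ := fun k => (r (k+1) - s (k+1))⁻¹ with hDdef
  have hD : ∀ k, D (k+1) = r (k+1)^2 * D k - r (k+1) := fun k => by
    simp only [hDdef]
    rw [hrrec _ (by omega), hsrec _ (by omega)]
    exact inv_sub_step _ (hrne _ (by omega)) (hsne _)
      (shadow_sub_ne_zero hrrec hs1 hsrec (hsne 0) k)
  have hD0 : D 0 = s 0 := by simp [hDdef, hs1]
  rw [← hD0, ← eq_sqProd_mul_sub_weightedInvSum hrne hD, inv_inv]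

end Shadowing

open Shadowing in
theorem stmt19_general (v r s : ℕ → ℝ) (kk : ℕ → ℕ) (w : ℝ)
    (hrrec : ∀ j, 1 ≤ j → r (j+1) = v j - 1 / r j)
    (hs1 : s 1 = r 1 - 1 / s 0)
    (hsrec : ∀ j, 1 ≤ j → s (j+1) = v j - 1 / s j)
    (hrne : ∀ j, 1 ≤ j → r j ≠ 0) (hsne : ∀ j, s j ≠ 0)
    (hwconv : Filter.Tendsto
      (fun j => ∑ i ∈ Finset.Icc 1 (kk j),
        ((∏ m ∈ Finset.Icc 1 (i-1), (r m)^2) * r i)⁻¹)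
      Filter.atTop (nhds w))
    (hhconv : Filter.Tendsto
      (fun j => (∏ m ∈ Finset.Icc 1 (kk j), (r m)^2)⁻¹)
      Filter.atTop (nhds 0))
    (hsw : s 0 ≠ w) :
    (∀ j, |r (kk j + 1) - s (kk j + 1)| =
      (∏ m ∈ Finset.Icc 1 (kk j), (r m)^2)⁻¹ /
        |s 0 - ∑ i ∈ Finset.Icc 1 (kk j),
          ((∏ m ∈ Finset.Icc 1 (i-1), (r m)^2) * r i)⁻¹|) ∧
    Filter.Tendsto (fun j => |r (kk j + 1) - s (kk j + 1)|)
      Filter.atTop (nhds 0) := by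
  have habs : ∀ j, |r (kk j + 1) - s (kk j + 1)| =
      (sqProd r (kk j))⁻¹ / |s 0 - weightedInvSum r (kk j)| := fun j => by
    rw [shadow_sub_eq hrrec hs1 hsrec hrne hsne, abs_inv, abs_mul,
      abs_of_pos (sqProd_pos hrne _), mul_inv, div_eq_mul_inv]
  refine ⟨habs, ?_⟩
  have hlim := hhconv.div (tendsto_const_nhds.sub hwconv).abs
    (abs_ne_zero.mpr (sub_ne_zero.mpr hsw))
  rw [zero_div] at hlim
  exact hlim.congr fun j => (habs j).symm

/-- Convergence of shadowed orbits: with `r_{k+1} = v_k - 1/r_k`, `|v_k| ≤ Cλ`,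
indices `k_j` enumerating times with `|r_{k_j}| ≥ λ⁻²`,
`w_j = Σ_{i=1}^{k_j} 1/(r₁²⋯r_{i-1}² r_i)` and `h_j = 1/(r₁²⋯r_{k_j}²)`:
if `w_j → w`, `h_j → 0` and `s₀ ∉ {0, w}`, then for the shadowing orbit
`s₁ = r₁ - 1/s₀`, `s_{j+1} = v_j - 1/s_j` one has
`|r_{k_j+1} - s_{k_j+1}| = h_j/|s₀ - w_j| → 0`. -/
theorem stmt19 (lam C : ℝ) (v r s : ℕ → ℝ) (kk : ℕ → ℕ) (w : ℝ)
    (hlam : 2 ≤ lam) (hC : 0 < C)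
    (hv : ∀ j, |v j| ≤ C * lam)
    (hrrec : ∀ j, 1 ≤ j → r (j+1) = v j - 1 / r j)
    (hs1 : s 1 = r 1 - 1 / s 0)
    (hsrec : ∀ j, 1 ≤ j → s (j+1) = v j - 1 / s j)
    (hrne : ∀ j, 1 ≤ j → r j ≠ 0) (hsne : ∀ j, s j ≠ 0) (hs0 : s 0 ≠ 0)
    (hkk1 : ∀ j, 1 ≤ kk j) (hmono : StrictMono kk)
    (hkbig : ∀ j, lam⁻¹ ^ 2 ≤ |r (kk j)|)
    (hwconv : Filter.Tendsto
      (fun j => ∑ i ∈ Finset.Icc 1 (kk j),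
        ((∏ m ∈ Finset.Icc 1 (i-1), (r m)^2) * r i)⁻¹)
      Filter.atTop (nhds w))
    (hhconv : Filter.Tendsto
      (fun j => (∏ m ∈ Finset.Icc 1 (kk j), (r m)^2)⁻¹)
      Filter.atTop (nhds 0))
    (hsw : s 0 ≠ w)
    (hswj : ∀ j, s 0 ≠ ∑ i ∈ Finset.Icc 1 (kk j),
      ((∏ m ∈ Finset.Icc 1 (i-1), (r m)^2) * r i)⁻¹) :
    (∀ j, |r (kk j + 1) - s (kk j + 1)| =
      (∏ m ∈ Finset.Icc 1 (kk j), (r m)^2)⁻¹ /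
        |s 0 - ∑ i ∈ Finset.Icc 1 (kk j),
          ((∏ m ∈ Finset.Icc 1 (i-1), (r m)^2) * r i)⁻¹|) ∧
    Filter.Tendsto (fun j => |r (kk j + 1) - s (kk j + 1)|)
      Filter.atTop (nhds 0) :=
  stmt19_general v r s kk w hrrec hs1 hsrec hrne hsne hwconv hhconv hsw
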